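/- arXiv:1110.1466 — 3 statements merged into one kernel-verified Lean document; each statement's English description precedes it below -/
import Mathlib

section
/- Let R be a ℚ-domain (an integral domain containing ℚ), n ≥ 1 arbitrary, and let D be a locally nilpotent R-derivation of R[x_1,…,x_n]. Then: (i) if exp D belongs to J(R; x_1,…,x_n), then D is triangular; (ii) if exp D is affine, then D is affine. -/
/-!
Since `D` is locally nilpotent, on the span of the iterates `D^m g` the map `exp D - 1` is `D` plus
higher powers of `D`, so `D g` is recovered from the `(exp D - 1)^k g` by downward induction on
`k`: every `ℚ`-subspace stable under `exp D` is stable under `D`. Applied to the polynomials of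
degree `≤ 1`, which an affine automorphism preserves, this gives (ii).

Applied to `R[x_j : j ≤ i]` it gives `D x_i ∈ R[x_j : j ≤ i]` for all `i`. Write `R[x]` as `C[x_i]`
with `C = R[x_j : j ≠ i]`: then `D` preserves `A = R[x_j : j < i] ⊆ C` and `D x_i ∈ A[x_i]`. If
`D x_i` had `x_i`-degree `d ≥ 1`, the `x_i`-degree of `D^m x_i` would never drop below `1` (for
`d ≥ 2` it grows; for `d = 1` the leading coefficient `c` of `D^m x_i` becomes `e c f + δ c`, where
`e` is its degree and `f` that of `D x_i`; this stays nonzero because the degree function of the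
locally nilpotent derivation `δ = D|_A` is additive), contradicting local nilpotency.
-/

open MvPolynomial

/-- The group of `R`-algebra automorphisms of the polynomial ring `R[x_1,…,x_n]`. -/
abbrev PolyAut (R : Type*) [CommRing R] (n : ℕ) :=
  MvPolynomial (Fin n) R ≃ₐ[R] MvPolynomial (Fin n) R

/-- An automorphism is affine if `φ(x_i) = Σ_j a_{i,j} x_j + b_i` with `(a_{i,j})` invertible. -/
def IsAffineAut {R : Type*} [CommRing R] {n : ℕ} (φ : PolyAut R n) : Prop :=
  ∃ (a : Matrix (Fin n) (Fin n) R) (b : Fin n → R), IsUnit a.det ∧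
    ∀ i, φ (X i) = (∑ j, C (a i j) * X j) + C (b i)

/-- The exponential map of a derivation of `R[x_1,…,x_n]` over a `ℚ`-domain `R`. -/
noncomputable def expMap {R : Type*} [CommRing R] [Algebra ℚ R] {n : ℕ}
    (D : Derivation R (MvPolynomial (Fin n) R) (MvPolynomial (Fin n) R))
    (g : MvPolynomial (Fin n) R) : MvPolynomial (Fin n) R :=
  ∑ᶠ m : ℕ, (m.factorial : ℚ)⁻¹ • ((D.toLinearMap ^ m) g)

open Finset

namespace Derivation

section Leibniz
variable {R A : Type*} [CommSemiring R] [CommSemiring A] [Algebra R A] (D : Derivation R A A)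

theorem iterate_apply_mul (n : ℕ) (a b : A) :
    D^[n] (a * b) = ∑ ij ∈ antidiagonal n, n.choose ij.1 • (D^[ij.1] a * D^[ij.2] b) := by
  induction n with
  | zero => simp
  | succ n ih =>
    rw [sum_antidiagonal_choose_succ_nsmul (M := A) (fun i j => D^[i] a * D^[j] b) n]
    simp only [Function.iterate_succ_apply', ih, map_sum, map_nsmul, leibniz, smul_eq_mul,
      nsmul_add, sum_add_distrib]
    congr 1
    refine sum_congr rfl fun ⟨i, j⟩ hij => ?_
    rw [Nat.choose_symm_of_eq_add (HasAntidiagonal.mem_antidiagonal.1 hij).symm]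
    ring

theorem iterate_apply_eq_zero_of_le {a : A} {s m : ℕ} (ha : D^[s] a = 0) (hsm : s ≤ m) :
    D^[m] a = 0 := by
  obtain ⟨k, rfl⟩ := Nat.exists_eq_add_of_le hsm
  rw [add_comm, Function.iterate_add_apply, ha, iterate_map_zero]

theorem iterate_apply_mul_of_iterate_succ_eq_zero {a b : A} {s t : ℕ}
    (ha : D^[s + 1] a = 0) (hb : D^[t + 1] b = 0) :
    D^[s + t] (a * b) = (s + t).choose s • (D^[s] a * D^[t] b) := by
  rw [iterate_apply_mul, sum_eq_single (s, t)]
  · rintro ⟨i, j⟩ hij hne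
    rw [HasAntidiagonal.mem_antidiagonal] at hij
    rcases lt_or_gt_of_ne (show i ≠ s by rintro rfl; exact hne (by simp; omega)) with hi | hi
    · rw [D.iterate_apply_eq_zero_of_le hb (by omega), mul_zero, smul_zero]
    · rw [D.iterate_apply_eq_zero_of_le ha hi, zero_mul, smul_zero]
  · simp

theorem exists_iterate_ne_zero_and_iterate_succ_eq_zero {a : A} (ha : ∃ m, D^[m] a = 0)
    (ha0 : a ≠ 0) : ∃ s, D^[s] a ≠ 0 ∧ D^[s + 1] a = 0 := by
  classical
  have hpos : Nat.find ha ≠ 0 := fun h => ha0 (by simpa [h] using Nat.find_spec ha)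
  refine ⟨Nat.find ha - 1, Nat.find_min ha (by omega), ?_⟩
  rw [Nat.sub_add_cancel (Nat.pos_of_ne_zero hpos)]
  exact Nat.find_spec ha

end Leibniz

section Domain
variable {R A : Type*} [CommSemiring R] [CommRing A] [IsDomain A] [CharZero A] [Algebra R A]
  (D : Derivation R A A)

theorem iterate_apply_mul_ne_zero {a b : A} {s t : ℕ} (hs : D^[s] a ≠ 0) (hs1 : D^[s + 1] a = 0)
    (ht : D^[t] b ≠ 0) (ht1 : D^[t + 1] b = 0) : D^[s + t] (a * b) ≠ 0 := by
  rw [D.iterate_apply_mul_of_iterate_succ_eq_zero hs1 ht1, nsmul_eq_mul]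
  exact mul_ne_zero (Nat.cast_ne_zero.mpr (Nat.choose_pos (by omega)).ne') (mul_ne_zero hs ht)

/-- The degree `ν(a) = max {s | D^s a ≠ 0}` is additive, so `ν(a * b) ≥ ν(a) > ν(D a)`. -/
theorem mul_add_apply_ne_zero {a b : A} (ha : ∃ m, D^[m] a = 0) (hb : ∃ m, D^[m] b = 0)
    (ha0 : a ≠ 0) (hb0 : b ≠ 0) : a * b + D a ≠ 0 := by
  obtain ⟨s, hs, hs1⟩ := D.exists_iterate_ne_zero_and_iterate_succ_eq_zero ha ha0
  obtain ⟨t, ht, ht1⟩ := D.exists_iterate_ne_zero_and_iterate_succ_eq_zero hb hb0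
  intro h
  have h' := congrArg D^[s + t] h
  rw [iterate_map_add, iterate_map_zero, ← Function.iterate_succ_apply,
    D.iterate_apply_eq_zero_of_le hs1 (by omega), add_zero] at h'
  exact D.iterate_apply_mul_ne_zero hs hs1 ht ht1 h'

end Domain
end Derivation

namespace Module.End

variable {V : Type*} [AddCommGroup V] [Module ℚ V]

def IsExpOf (φ d : Module.End ℚ V) : Prop :=
  ∀ v M, (d ^ M) v = 0 → φ v = ∑ m ∈ range M, (m.factorial : ℚ)⁻¹ • (d ^ m) v

variable (d : Module.End ℚ V)

def iterateSpan (v : V) (k : ℕ) : Submodule ℚ V :=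
  Submodule.span ℚ ((fun m => (d ^ m) v) '' Set.Ici k)

theorem pow_apply_mem_iterateSpan (v : V) {k m : ℕ} (h : k ≤ m) :
    (d ^ m) v ∈ d.iterateSpan v k :=
  Submodule.subset_span ⟨m, h, rfl⟩

theorem iterateSpan_le_iff {v : V} {k : ℕ} {W : Submodule ℚ V} :
    d.iterateSpan v k ≤ W ↔ ∀ m, k ≤ m → (d ^ m) v ∈ W := by
  simp [iterateSpan, Submodule.span_le, Set.subset_def]

variable {d} {φ : Module.End ℚ V}

theorem IsExpOf.sub_one_apply_eq_sum (hφ : φ.IsExpOf d)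
    {w : V} {M : ℕ} (hM : (d ^ (M + 1)) w = 0) :
    (φ - 1) w = ∑ j ∈ range M, ((j + 1).factorial : ℚ)⁻¹ • (d ^ (j + 1)) w := by
  rw [LinearMap.sub_apply, hφ w _ hM, sum_range_succ']
  simp

theorem IsExpOf.sub_one_apply_pow_apply_eq_sum (hφ : φ.IsExpOf d)
    {v : V} {M : ℕ} (hM : (d ^ M) v = 0) (k : ℕ) :
    (φ - 1) ((d ^ k) v) =
      ∑ j ∈ range M, ((j + 1).factorial : ℚ)⁻¹ • (d ^ (j + 1 + k)) v := by
  simp_rw [pow_add d _ k, mul_apply]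
  exact hφ.sub_one_apply_eq_sum (by
    rw [← mul_apply, ← pow_add]; exact pow_map_zero_of_le (by omega) hM)

theorem IsExpOf.sub_one_apply_mem_iterateSpan (hφ : φ.IsExpOf d)
    {v : V} {M : ℕ} (hM : (d ^ M) v = 0) {k : ℕ} {w : V} (hw : w ∈ d.iterateSpan v k) :
    (φ - 1) w ∈ d.iterateSpan v (k + 1) := by
  suffices (d.iterateSpan v k).map (φ - 1) ≤ d.iterateSpan v (k + 1) from this ⟨w, hw, rfl⟩
  refine (Submodule.map_span_le _ _ _).mpr ?_
  rintro _ ⟨m, hm, rfl⟩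
  rw [hφ.sub_one_apply_pow_apply_eq_sum hM]
  exact Submodule.sum_mem _ fun j _ =>
    Submodule.smul_mem _ _ (pow_apply_mem_iterateSpan d v (by simp at hm; omega))

theorem IsExpOf.sub_one_apply_pow_apply_sub_mem (hφ : φ.IsExpOf d)
    {v : V} {M : ℕ} (hM : (d ^ M) v = 0) (k : ℕ) :
    (φ - 1) ((d ^ k) v) - (d ^ (k + 1)) v ∈ d.iterateSpan v (k + 2) := by
  rw [hφ.sub_one_apply_pow_apply_eq_sum (pow_map_zero_of_le M.le_succ hM),
    sum_range_succ']
  simp only [zero_add, Nat.factorial_one, Nat.cast_one, inv_one, one_smul, add_comm 1 k,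
    add_sub_cancel_right]
  exact Submodule.sum_mem _ fun j _ =>
    Submodule.smul_mem _ _ (pow_apply_mem_iterateSpan d v (by omega))

theorem IsExpOf.sub_one_pow_apply_sub_mem (hφ : φ.IsExpOf d)
    {v : V} {M : ℕ} (hM : (d ^ M) v = 0) (k : ℕ) :
    ((φ - 1) ^ k) v - (d ^ k) v ∈ d.iterateSpan v (k + 1) := by
  induction k with
  | zero => simp
  | succ k ih =>
    have h : ((φ - 1) ^ (k + 1)) v - (d ^ (k + 1)) v =
        (φ - 1) (((φ - 1) ^ k) v - (d ^ k) v) + ((φ - 1) ((d ^ k) v) - (d ^ (k + 1)) v) := by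
      rw [map_sub, sub_add_sub_cancel, pow_succ', mul_apply]
    rw [h]
    exact add_mem (hφ.sub_one_apply_mem_iterateSpan hM ih)
      (hφ.sub_one_apply_pow_apply_sub_mem hM k)

/-- `φ - 1 = d + O(d²)` on the iterates of `v`, so `d^k v` agrees with `(φ - 1)^k v ∈ W` up to
higher iterates, which lie in `W` by downward induction on `k`. -/
theorem IsExpOf.apply_mem (hφ : φ.IsExpOf d) (hd : ∀ v, ∃ M, (d ^ M) v = 0)
    {W : Submodule ℚ V} (hW : ∀ w ∈ W, φ w ∈ W) {v : V} (hv : v ∈ W) : d v ∈ W := by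
  obtain ⟨M, hM⟩ := hd v
  have hWsub : ∀ k : ℕ, ((φ - 1) ^ k) v ∈ W := fun k => by
    induction k with
    | zero => exact hv
    | succ k ih =>
      rw [pow_succ', mul_apply, LinearMap.sub_apply]
      exact sub_mem (hW _ ih) ih
  suffices d.iterateSpan v 1 ≤ W by simpa using this (pow_apply_mem_iterateSpan d v le_rfl)
  refine Nat.decreasingInduction (motive := fun k _ => d.iterateSpan v (k + 1) ≤ W)
    (fun k _ ih => ?_) ((iterateSpan_le_iff d).mpr fun m hm => ?_) (Nat.zero_le M)
  · refine (iterateSpan_le_iff d).mpr fun m hm => ?_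
    rcases hm.eq_or_lt with rfl | hm
    · rw [← sub_sub_cancel (((φ - 1) ^ (k + 1)) v) ((d ^ (k + 1)) v)]
      exact sub_mem (hWsub _) (ih (hφ.sub_one_pow_apply_sub_mem hM _))
    · exact ih (pow_apply_mem_iterateSpan d v hm)
  · rw [pow_map_zero_of_le (by omega) hM]
    exact W.zero_mem

end Module.End

namespace Polynomial
variable {S B : Type*} [CommRing S] [CommRing B] [Algebra S B]

noncomputable def constCoeffDer (D : Derivation S B[X] B[X]) : Derivation S B B :=
  (lcoeff B 0).compDer (D.compAlgebraMap B)

theorem constCoeffDer_apply (D : Derivation S B[X] B[X]) (c : B) :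
    constCoeffDer D c = (D (C c)).coeff 0 := rfl

variable {D : Derivation S B[X] B[X]}

theorem derivation_apply_C_eq {c b : B} (h : D (C c) = C b) :
    D (C c) = C (constCoeffDer D c) := by
  rw [constCoeffDer_apply, h, coeff_C_zero]

theorem coeff_derivation_apply {p : B[X]}
    (hp : ∀ k, D (C (p.coeff k)) = C (constCoeffDer D (p.coeff k))) (k : ℕ) :
    (D p).coeff k = constCoeffDer D (p.coeff k) + (derivative p * D X).coeff k := by
  have hsum := p.as_sum_range_C_mul_X_pow
  have hD : D p = (∑ j ∈ range (p.natDegree + 1), C (constCoeffDer D (p.coeff j)) * X ^ j) +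
      derivative p * D X := by
    rw [congrArg D hsum, congrArg derivative hsum]
    simp only [map_sum, Derivation.leibniz, Derivation.leibniz_pow, hp, derivative_C_mul_X_pow,
      sum_mul, ← sum_add_distrib, smul_eq_mul, nsmul_eq_mul, map_mul, C_eq_natCast]
    exact sum_congr rfl fun j _ => by ring
  rw [hD, coeff_add, finsetSum_coeff]
  simp only [coeff_C_mul_X_pow, sum_ite_eq, mem_range]
  split_ifs with hk
  · rfl
  · rw [p.coeff_eq_zero_of_natDegree_lt (by omega), map_zero]

variable {A : Subring B} (hA : ∀ a ∈ A, ∃ b ∈ A, D (C a) = C b)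
include hA

theorem constCoeffDer_mem {a : B} (ha : a ∈ A) :
    constCoeffDer D a ∈ A ∧ D (C a) = C (constCoeffDer D a) := by
  obtain ⟨b, hb, h⟩ := hA a ha
  have h' := derivation_apply_C_eq h
  rw [h', C_inj] at h
  exact ⟨h ▸ hb, h'⟩

theorem iterate_derivation_apply_C {a : B} (ha : a ∈ A) (m : ℕ) :
    D^[m] (C a) = C ((constCoeffDer D)^[m] a) ∧ (constCoeffDer D)^[m] a ∈ A := by
  induction m with
  | zero => exact ⟨rfl, ha⟩
  | succ m ih =>
    rw [Function.iterate_succ_apply', Function.iterate_succ_apply', ih.1]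
    exact (constCoeffDer_mem hA ih.2).symm

theorem coeff_derivation_apply_mem (hf : ∀ k, (D X).coeff k ∈ A) {p : B[X]}
    (hp : ∀ k, p.coeff k ∈ A) (k : ℕ) : (D p).coeff k ∈ A := by
  rw [coeff_derivation_apply fun j => (constCoeffDer_mem hA (hp j)).2, coeff_mul]
  refine add_mem (constCoeffDer_mem hA (hp k)).1 (sum_mem fun x _ => mul_mem ?_ (hf x.2))
  rw [coeff_derivative]
  exact mul_mem (hp _) (add_mem (natCast_mem A x.1) (one_mem A))

theorem exists_iterate_constCoeffDer_eq_zero (hD : ∀ p, ∃ m, D^[m] p = 0) {a : B}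
    (ha : a ∈ A) :
    ∃ m, (constCoeffDer D)^[m] a = 0 := by
  obtain ⟨m, hm⟩ := hD (C a)
  exact ⟨m, C_eq_zero.mp ((iterate_derivation_apply_C hA ha m).1 ▸ hm)⟩

variable [IsDomain B] [CharZero B]

/-- With `e = deg p`, `d = deg (D X)` and `δ = constCoeffDer D`, the coefficient of `X^(e + d - 1)`
in `D p` is `δ p_(e+d-1) + e p_e (D X)_d`: for `d ≥ 2` the first term vanishes, for `d = 1` the
sum is nonzero by `mul_add_apply_ne_zero`. -/
theorem natDegree_le_natDegree_derivation_apply (hD : ∀ p, ∃ m, D^[m] p = 0)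
    (hf : ∀ k, (D X).coeff k ∈ A) (hdeg : 1 ≤ (D X).natDegree) {p : B[X]}
    (hp : ∀ k, p.coeff k ∈ A) (he : 1 ≤ p.natDegree) : p.natDegree ≤ (D p).natDegree := by
  set e := p.natDegree
  set d := (D X).natDegree
  have hlead : (derivative p * D X).coeff (e - 1 + d) =
      p.coeff e * ((e - 1 : ℕ) + 1) * (D X).coeff d := by
    rw [coeff_mul_add_eq_of_natDegree_le (natDegree_derivative_le p) le_rfl, coeff_derivative,
      Nat.sub_add_cancel he]
  have hcoeff := coeff_derivation_apply (fun j => (constCoeffDer_mem hA (hp j)).2) (e - 1 + d)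
  rw [hlead] at hcoeff
  have hpe : p.coeff e ≠ 0 := leadingCoeff_ne_zero.mpr (ne_zero_of_natDegree_gt he)
  have hfd : (D X).coeff d ≠ 0 := leadingCoeff_ne_zero.mpr (ne_zero_of_natDegree_gt hdeg)
  have hcast : ((e - 1 : ℕ) + 1 : B) ≠ 0 := Nat.cast_add_one_ne_zero _
  suffices (D p).coeff (e - 1 + d) ≠ 0 from le_trans (by omega) (le_natDegree_of_ne_zero this)
  rw [hcoeff]
  rcases hdeg.eq_or_lt with hd | hd
  · rw [← hd] at hfd ⊢
    rw [Nat.sub_add_cancel he, add_comm, mul_assoc]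
    have hef : ((e - 1 : ℕ) + 1 : B) * (D X).coeff 1 ∈ A :=
      mul_mem (add_mem (natCast_mem A _) (one_mem A)) (hf 1)
    exact (constCoeffDer D).mul_add_apply_ne_zero
      (exists_iterate_constCoeffDer_eq_zero hA hD (hp e))
      (exists_iterate_constCoeffDer_eq_zero hA hD hef) hpe (mul_ne_zero hcast hfd)
  · rw [p.coeff_eq_zero_of_natDegree_lt (by omega), map_zero, zero_add]
    exact mul_ne_zero (mul_ne_zero hpe hcast) hfd

/-- Otherwise `1 ≤ deg D^m X` for every `m`. -/
theorem natDegree_derivation_X_eq_zero (hD : ∀ p, ∃ m, D^[m] p = 0)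
    (hf : ∀ k, (D X).coeff k ∈ A) :
    (D X).natDegree = 0 := by
  by_contra hdeg
  have key : ∀ m, (∀ k, (D^[m] X).coeff k ∈ A) ∧ 1 ≤ (D^[m] X).natDegree := by
    intro m
    induction m with
    | zero =>
      refine ⟨fun k => ?_, by simp⟩
      rw [Function.iterate_zero_apply, coeff_X]
      split_ifs
      exacts [one_mem A, zero_mem A]
    | succ m ih =>
      rw [Function.iterate_succ_apply']
      exact ⟨coeff_derivation_apply_mem hA hf ih.1, ih.2.trans
        (natDegree_le_natDegree_derivation_apply hA hD hf (by omega) ih.1 ih.2)⟩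
  obtain ⟨m, hm⟩ := hD X
  simpa [hm] using (key m).2

end Polynomial

namespace Derivation
variable {R A B : Type*} [CommRing R] [CommRing A] [CommRing B] [Algebra R A] [Algebra R B]

def conj (e : A ≃ₐ[R] B) (D : Derivation R A A) : Derivation R B B :=
  Derivation.mk' (e.toLinearMap ∘ₗ D.toLinearMap ∘ₗ e.symm.toLinearMap) fun a b => by
    simp [leibniz, smul_eq_mul]

theorem conj_apply (e : A ≃ₐ[R] B) (D : Derivation R A A) (b : B) :
    D.conj e b = e (D (e.symm b)) := rfl

theorem iterate_conj_apply (e : A ≃ₐ[R] B) (D : Derivation R A A) (m : ℕ) (b : B) :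
    (D.conj e)^[m] b = e (D^[m] (e.symm b)) := by
  induction m generalizing b with
  | zero => simp
  | succ m ih => simp [ih, conj_apply]

end Derivation

namespace MvPolynomial
variable {R σ : Type*} [CommRing R]

theorem map_mem_supported (φ : MvPolynomial σ R →ₐ[R] MvPolynomial σ R) {s : Set σ}
    (h : ∀ j ∈ s, φ (X j) ∈ supported R s) {p : MvPolynomial σ R}
    (hp : p ∈ supported R s) :
    φ p ∈ supported R s := by
  suffices supported R s ≤ (supported R s).comap φ from this hp
  rw [supported_eq_adjoin_X, Algebra.adjoin_le_iff]
  rintro _ ⟨j, hj, rfl⟩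
  rw [← supported_eq_adjoin_X]
  exact h j hj

theorem _root_.Derivation.apply_mem_supported
    (D : Derivation R (MvPolynomial σ R) (MvPolynomial σ R)) {s : Set σ}
    (h : ∀ j ∈ s, D (X j) ∈ supported R s) {p : MvPolynomial σ R}
    (hp : p ∈ supported R s) : D p ∈ supported R s := by
  rw [supported_eq_adjoin_X] at hp ⊢
  induction hp using Algebra.adjoin_induction with
  | mem _ hq => obtain ⟨j, hj, rfl⟩ := hq; rw [← supported_eq_adjoin_X]; exact h j hj
  | algebraMap r => rw [D.map_algebraMap]; exact zero_mem _
  | add _ _ _ _ hq hr => rw [map_add]; exact add_mem hq hr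
  | mul q r hq hr hDq hDr =>
    rw [D.leibniz, smul_eq_mul, smul_eq_mul]
    exact add_mem (mul_mem hq hDr) (mul_mem hr hDq)

variable [DecidableEq σ] (i : σ)

noncomputable def polynomialEquivAt :
    MvPolynomial σ R ≃ₐ[R] Polynomial (MvPolynomial {j // j ≠ i} R) :=
  (renameEquiv R (Equiv.optionSubtypeNe i).symm).trans (optionEquivLeft R _)

theorem polynomialEquivAt_X_self :
    polynomialEquivAt i (X i : MvPolynomial σ R) = Polynomial.X := by
  simp [polynomialEquivAt, optionEquivLeft_X_none]

theorem polynomialEquivAt_X_of_ne {j : σ} (h : j ≠ i) :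
    polynomialEquivAt i (X j : MvPolynomial σ R) = Polynomial.C (X ⟨j, h⟩) := by
  simp [polynomialEquivAt, Equiv.optionSubtypeNe_symm_of_ne h, optionEquivLeft_X_some]

variable [PartialOrder σ]

theorem map_supported_lt_polynomialEquivAt :
    (supported R {j | j < i}).map (polynomialEquivAt i).toAlgHom =
      (supported R {u : {j // j ≠ i} | u.1 < i}).map Polynomial.CAlgHom := by
  simp only [supported_eq_adjoin_X, AlgHom.map_adjoin, Set.image_image]
  congr 1
  ext p
  constructor
  · rintro ⟨j, hj, rfl⟩
    exact ⟨⟨j, hj.ne⟩, hj, (polynomialEquivAt_X_of_ne i hj.ne).symm⟩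
  · rintro ⟨u, hu, rfl⟩
    exact ⟨u.1, hu, polynomialEquivAt_X_of_ne i u.2⟩

theorem mem_supported_lt_iff {p : MvPolynomial σ R} :
    p ∈ supported R {j | j < i} ↔
      ∃ a ∈ supported R {u : {j // j ≠ i} | u.1 < i},
        polynomialEquivAt i p = Polynomial.C a := by
  constructor
  · intro hp
    obtain ⟨a, ha, h⟩ : polynomialEquivAt i p ∈
        (supported R {u : {j // j ≠ i} | u.1 < i}).map Polynomial.CAlgHom := by
      rw [← map_supported_lt_polynomialEquivAt]; exact ⟨p, hp, rfl⟩
    exact ⟨a, ha, h.symm⟩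
  · rintro ⟨a, ha, h⟩
    obtain ⟨q, hq, hqa⟩ : Polynomial.C a ∈ (supported R {j | j < i}).map
        (polynomialEquivAt i).toAlgHom := by
      rw [map_supported_lt_polynomialEquivAt]; exact ⟨a, ha, rfl⟩
    rwa [(polynomialEquivAt i).injective (hqa.trans h.symm)] at hq

theorem coeff_polynomialEquivAt_mem {p : MvPolynomial σ R} (hp : p ∈ supported R {j | j ≤ i})
    (k : ℕ) : (polynomialEquivAt i p).coeff k ∈ supported R {u : {j // j ≠ i} | u.1 < i} := by
  suffices (supported R {j | j ≤ i}).map (polynomialEquivAt i).toAlgHom ≤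
      (Polynomial.mapAlgHom (supported R {u : {j // j ≠ i} | u.1 < i}).val).range by
    obtain ⟨q, hq⟩ := this ⟨p, hp, rfl⟩
    rw [← show Polynomial.map _ q = polynomialEquivAt i p from hq, Polynomial.coeff_map]
    exact (q.coeff k).2
  rw [supported_eq_adjoin_X, AlgHom.map_adjoin, Algebra.adjoin_le_iff]
  rintro _ ⟨_, ⟨j, hj, rfl⟩, rfl⟩
  rcases (show j ≤ i from hj).eq_or_lt with rfl | hlt
  · exact ⟨Polynomial.X, by simp [polynomialEquivAt_X_self]⟩
  · have hX : X ⟨j, hlt.ne⟩ ∈ supported R {u : {j // j ≠ i} | u.1 < i} :=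
      supported_eq_adjoin_X (R := R) _ ▸ Algebra.subset_adjoin ⟨_, hlt, rfl⟩
    exact ⟨Polynomial.C ⟨_, hX⟩,
      by simp [polynomialEquivAt_X_of_ne i hlt.ne]⟩

theorem totalDegree_aeval_le {R σ τ : Type*} [CommSemiring R] (f : σ → MvPolynomial τ R)
    (hf : ∀ j, (f j).totalDegree ≤ 1) (p : MvPolynomial σ R) :
    (aeval f p).totalDegree ≤ p.totalDegree := by
  conv_lhs => rw [p.as_sum, map_sum]
  refine (totalDegree_finsetSum _ _).trans (Finset.sup_le fun s hs => ?_)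
  rw [aeval_monomial, algebraMap_eq]
  refine (totalDegree_mul _ _).trans ?_
  rw [totalDegree_C, zero_add]
  refine (totalDegree_finsetProd _ _).trans (le_trans ?_ (le_totalDegree hs))
  exact Finset.sum_le_sum fun j _ =>
    (totalDegree_pow _ _).trans (by simpa using Nat.mul_le_mul_left (s j) (hf j))

end MvPolynomial

theorem Derivation.apply_X_mem_supported_lt {R σ : Type*} [CommRing R] [IsDomain R] [CharZero R]
    [PartialOrder σ] (D : Derivation R (MvPolynomial σ R) (MvPolynomial σ R))
    (hD : ∀ p, ∃ m, D^[m] p = 0) (hD_le : ∀ j, D (X j) ∈ supported R {k | k ≤ j})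
    (i : σ) :
    D (X i) ∈ supported R {j | j < i} := by
  classical
  set E := polynomialEquivAt (R := R) i
  set A := supported R {u : {j // j ≠ i} | u.1 < i}
  have hstab {p} (hp : p ∈ supported R {j | j < i}) : D p ∈ supported R {j | j < i} :=
    D.apply_mem_supported (fun j (hj : j < i) =>
      supported_mono (fun k (hk : k ≤ j) => show k < i from hk.trans_lt hj) (hD_le j)) hp
  have hA : ∀ a ∈ A.toSubring, ∃ b ∈ A.toSubring,
      D.conj E (Polynomial.C a) = Polynomial.C b := by
    intro a ha
    have hp : E.symm (Polynomial.C a) ∈ supported R {j | j < i} :=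
      (mem_supported_lt_iff i).mpr ⟨a, ha, E.apply_symm_apply _⟩
    exact (mem_supported_lt_iff i).mp (hstab hp)
  have hX : D.conj E Polynomial.X = E (D (X i)) := by
    rw [conj_apply, E.symm_apply_eq.mpr (polynomialEquivAt_X_self i).symm]
  have hf (k : ℕ) : (D.conj E Polynomial.X).coeff k ∈ A.toSubring :=
    hX ▸ coeff_polynomialEquivAt_mem i (hD_le i) k
  have hdeg := Polynomial.natDegree_derivation_X_eq_zero hA (fun q => ?_) hf
  · refine (mem_supported_lt_iff i).mpr ⟨_, hf 0, ?_⟩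
    rw [← hX]
    exact Polynomial.eq_C_of_natDegree_eq_zero hdeg
  · obtain ⟨m, hm⟩ := hD (E.symm q)
    exact ⟨m, by rw [iterate_conj_apply, hm, map_zero]⟩

theorem IsAffineAut.totalDegree_apply_le {R : Type*} [CommRing R] {n : ℕ} {φ : PolyAut R n}
    (hφ : IsAffineAut φ) (p : MvPolynomial (Fin n) R) : (φ p).totalDegree ≤ p.totalDegree := by
  obtain ⟨a, b, -, hab⟩ := hφ
  rw [show φ p = aeval (φ ∘ X) p from DFunLike.congr_fun (aeval_unique φ.toAlgHom) p]
  refine totalDegree_aeval_le _ (fun j => ?_) p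
  rw [Function.comp_apply, hab j]
  refine (totalDegree_add _ _).trans (max_le ?_ (by simp))
  refine (totalDegree_finsetSum _ _).trans (Finset.sup_le fun k _ => ?_)
  have hX : (X k : MvPolynomial (Fin n) R).totalDegree ≤ 1 := by
    simpa [X] using totalDegree_monomial_le (Finsupp.single k 1) (1 : R)
  exact (totalDegree_mul _ _).trans (by simpa using hX)

theorem expMap_eq_sum {R : Type*} [CommRing R] [Algebra ℚ R] {n : ℕ}
    (D : Derivation R (MvPolynomial (Fin n) R) (MvPolynomial (Fin n) R))
    {g : MvPolynomial (Fin n) R} {M : ℕ} (hM : (D.toLinearMap ^ M) g = 0) :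
    expMap D g = ∑ m ∈ range M, (m.factorial : ℚ)⁻¹ • (D.toLinearMap ^ m) g := by
  refine finsum_eq_sum_of_support_subset _ fun m hm => ?_
  by_contra hmM
  simp only [coe_range, Set.mem_Iio, not_lt] at hmM
  exact hm (by dsimp only; rw [Module.End.pow_map_zero_of_le hmM hM, smul_zero])

theorem Derivation.apply_mem_of_expMap_mem {R : Type*} [CommRing R] [Algebra ℚ R] {n : ℕ}
    (D : Derivation R (MvPolynomial (Fin n) R) (MvPolynomial (Fin n) R))
    (hD : ∀ g, ∃ m : ℕ, (D.toLinearMap ^ m) g = 0) {φ : PolyAut R n}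
    (hφ : ∀ g, φ g = expMap D g) {W : Submodule ℚ (MvPolynomial (Fin n) R)}
    (hW : ∀ w ∈ W, φ w ∈ W) {g : MvPolynomial (Fin n) R} (hg : g ∈ W) : D g ∈ W := by
  have hpow (m : ℕ) (v) :
      ((D.toLinearMap.restrictScalars ℚ) ^ m) v = (D.toLinearMap ^ m) v := by
    rw [Module.End.pow_apply, Module.End.pow_apply]
    rfl
  have hexp : Module.End.IsExpOf (φ.toLinearMap.restrictScalars ℚ)
      (D.toLinearMap.restrictScalars ℚ) :=
    fun v M hM => by
      simp only [hpow] at hM ⊢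
      exact (hφ v).trans (expMap_eq_sum D hM)
  exact hexp.apply_mem (fun v => by simpa only [hpow] using hD v) hW hg

theorem statement8_general {R : Type*} [CommRing R] [IsDomain R] [Algebra ℚ R]
    {n : ℕ}
    (D : Derivation R (MvPolynomial (Fin n) R) (MvPolynomial (Fin n) R))
    (hD : ∀ g, ∃ m : ℕ, (D.toLinearMap ^ m) g = 0) :
    ((∃ φ : PolyAut R n, (∀ g, φ g = expMap D g) ∧
        ∀ i : Fin n, φ (X i) ∈ Algebra.adjoin R
          ((fun j : Fin n => (X j : MvPolynomial (Fin n) R)) '' {j : Fin n | j ≤ i})) →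
      ∀ i : Fin n, D (X i) ∈ Algebra.adjoin R
        ((fun j : Fin n => (X j : MvPolynomial (Fin n) R)) '' {j : Fin n | j < i})) ∧
    ((∃ φ : PolyAut R n, (∀ g, φ g = expMap D g) ∧ IsAffineAut φ) →
      ∀ i : Fin n, (D (X i)).totalDegree ≤ 1) := by
  refine ⟨fun ⟨φ, hφ, hJ⟩ i => ?_, fun ⟨φ, hφ, haff⟩ i => ?_⟩
  · have : CharZero R := charZero_of_injective_algebraMap (algebraMap ℚ R).injective
    simp_rw [← supported_eq_adjoin_X] at hJ ⊢
    have hφ_le (j : Fin n) {p} (hp : p ∈ supported R {k | k ≤ j}) :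
        φ p ∈ supported R {k | k ≤ j} :=
      map_mem_supported φ.toAlgHom (fun k (hk : k ≤ j) =>
        supported_mono (fun l (hl : l ≤ k) => show l ≤ j from hl.trans hk) (hJ k)) hp
    refine D.apply_X_mem_supported_lt (fun p => ?_) (fun j => ?_) i
    · obtain ⟨m, hm⟩ := hD p
      exact ⟨m, by rwa [Module.End.pow_apply] at hm⟩
    · exact D.apply_mem_of_expMap_mem hD hφ
        (W := (supported R {k | k ≤ j}).toSubmodule.restrictScalars ℚ)
        (fun _ => hφ_le j) (X_mem_supported.mpr (le_refl j))
  · refine (mem_restrictTotalDegree _ _ _).mp <|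
      D.apply_mem_of_expMap_mem hD hφ (W := (restrictTotalDegree _ R 1).restrictScalars ℚ)
        (fun w hw => (mem_restrictTotalDegree _ _ _).mpr ((haff.totalDegree_apply_le w).trans
          ((mem_restrictTotalDegree _ _ _).mp hw)))
        ((mem_restrictTotalDegree _ _ _).mpr (totalDegree_X i).le)

/-- For a locally nilpotent derivation `D` of `R[x_1,…,x_n]` over a `ℚ`-domain `R`:
(i) if `exp D` belongs to `J(R; x_1,…,x_n)` (it maps each `R[x_1,…,x_l]` into itself),
then `D` is triangular; (ii) if `exp D` is affine, then `D` is affine. -/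
theorem statement8 {R : Type*} [CommRing R] [IsDomain R] [Algebra ℚ R]
    {n : ℕ} (hn : 1 ≤ n)
    (D : Derivation R (MvPolynomial (Fin n) R) (MvPolynomial (Fin n) R))
    (hD : ∀ g, ∃ m : ℕ, (D.toLinearMap ^ m) g = 0) :
    ((∃ φ : PolyAut R n, (∀ g, φ g = expMap D g) ∧
        ∀ i : Fin n, φ (X i) ∈ Algebra.adjoin R
          ((fun j : Fin n => (X j : MvPolynomial (Fin n) R)) '' {j : Fin n | j ≤ i})) →
      ∀ i : Fin n, D (X i) ∈ Algebra.adjoin R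
        ((fun j : Fin n => (X j : MvPolynomial (Fin n) R)) '' {j : Fin n | j < i})) ∧
    ((∃ φ : PolyAut R n, (∀ g, φ g = expMap D g) ∧ IsAffineAut φ) →
      ∀ i : Fin n, (D (X i)).totalDegree ≤ 1) :=
  statement8_general D hD
end

section
/- Let R be an integral domain containing ℤ, K its field of fractions, and S an over-domain of R (a domain containing R as a subring). If f ∈ R[x_1,x_2] is a coordinate of S[x_1,x_2] over S, then f is a coordinate of K[x_1,x_2] over K. -/
/-!
Base change along `S → L = Frac S` makes `f` a coordinate of `L[x,y]`, and `L` contains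
`K = Frac R`. Let `Φ` be an `L`-automorphism with `Φ x = f`. Its Jacobian is a unit, hence a
nonzero constant `a`, so `a⁻¹ Φ(y)` is a slice of the derivation `D = ∂(f, ·)/∂(x, y)`:
`D (a⁻¹ Φ(y)) = 1`. As `D` is defined over `K`, applying a `K`-linear retraction `L → K` to the
coefficients gives a slice `s ∈ K[x,y]`. Over `L`, `Φ⁻¹` turns `(f, s)` into `(x, t)` with
`∂t/∂y = a⁻¹`, which in characteristic zero is a triangular automorphism; so `(f, s)` defines an
automorphism of `L[x,y]`. Being defined over `K`, it is injective on `K[x,y]`, and the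
retraction maps preimages of polynomials over `K` to preimages, so it is onto `K[x,y]` as well.
-/

open MvPolynomial

namespace MvPolynomial

section Jacobian

variable {A B σ τ ι : Type*} [CommRing A] [CommRing B]

theorem pderiv_aeval [Fintype σ] (g : σ → MvPolynomial τ A) (i : τ) (p : MvPolynomial σ A) :
    pderiv i (aeval g p) = ∑ j, aeval g (pderiv j p) * pderiv i (g j) := by
  classical
  induction p using MvPolynomial.induction_on with
  | C a => simp only [aeval_C, algebraMap_eq, pderiv_C, map_zero, zero_mul, Finset.sum_const_zero]
  | add p q hp hq => simp only [map_add, hp, hq, add_mul, Finset.sum_add_distrib]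
  | mul_X p k hp =>
    simp only [map_mul, aeval_X, pderiv_mul, hp, pderiv_X, Pi.single_apply, map_add, add_mul,
      Finset.sum_add_distrib, apply_ite (aeval g), map_zero, mul_ite, mul_one, mul_zero,
      ite_mul, zero_mul, Finset.sum_ite_eq, Finset.mem_univ, if_true, mul_right_comm _ (g k),
      ← Finset.sum_mul]

noncomputable def jacobianMatrix (g : ι → MvPolynomial σ A) :
    Matrix ι σ (MvPolynomial σ A) :=
  Matrix.of fun i j => pderiv j (g i)

theorem jacobianMatrix_aeval [Fintype σ] (g : σ → MvPolynomial τ A)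
    (h : ι → MvPolynomial σ A) :
    jacobianMatrix (fun i => aeval g (h i)) =
      (jacobianMatrix h).map (aeval g) * jacobianMatrix g := by
  ext i k
  simp only [jacobianMatrix, Matrix.of_apply, Matrix.mul_apply, Matrix.map_apply, pderiv_aeval]

theorem jacobianMatrix_X [DecidableEq σ] : jacobianMatrix (X : σ → MvPolynomial σ A) = 1 := by
  ext i j
  simp [jacobianMatrix, pderiv_X, Matrix.one_apply, Pi.single_apply]

theorem aeval_algEquiv_X (Φ : MvPolynomial σ A ≃ₐ[A] MvPolynomial σ A)
    (p : MvPolynomial σ A) :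
    aeval (fun i => Φ (X i)) p = Φ p :=
  (DFunLike.congr_fun (aeval_unique (Φ : MvPolynomial σ A →ₐ[A] MvPolynomial σ A)) p).symm

theorem isUnit_det_jacobianMatrix [Fintype σ] [DecidableEq σ]
    (Φ : MvPolynomial σ A ≃ₐ[A] MvPolynomial σ A) :
    IsUnit (jacobianMatrix fun i => Φ (X i)).det := by
  have hmul : (jacobianMatrix fun i => Φ.symm (X i)).map (aeval fun i => Φ (X i)) *
      jacobianMatrix (fun i => Φ (X i)) = 1 := by
    simp only [← jacobianMatrix_aeval, aeval_algEquiv_X, AlgEquiv.apply_symm_apply]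
    exact jacobianMatrix_X
  exact IsUnit.of_mul_eq_one_right _ (by rw [← Matrix.det_mul, hmul, Matrix.det_one])

noncomputable def jacobianDerivation (f : MvPolynomial (Fin 2) A) :
    Derivation A (MvPolynomial (Fin 2) A) (MvPolynomial (Fin 2) A) :=
  pderiv 0 f • pderiv 1 - pderiv 1 f • pderiv 0

theorem jacobianDerivation_apply (f h : MvPolynomial (Fin 2) A) :
    jacobianDerivation f h = pderiv 0 f * pderiv 1 h - pderiv 1 f * pderiv 0 h :=
  rfl

theorem jacobianDerivation_eq_det (g : Fin 2 → MvPolynomial (Fin 2) A) :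
    jacobianDerivation (g 0) (g 1) = (jacobianMatrix g).det := by
  simp [jacobianDerivation_apply, jacobianMatrix, Matrix.det_fin_two]

theorem jacobianDerivation_aeval (g : Fin 2 → MvPolynomial (Fin 2) A)
    (p : MvPolynomial (Fin 2) A) :
    jacobianDerivation (g 0) (aeval g p) =
      aeval g (pderiv 1 p) * jacobianDerivation (g 0) (g 1) := by
  simp only [jacobianDerivation_apply, pderiv_aeval, Fin.sum_univ_two]
  ring

theorem map_jacobianDerivation (k : A →+* B) (f h : MvPolynomial (Fin 2) A) :
    map k (jacobianDerivation f h) = jacobianDerivation (map k f) (map k h) := by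
  simp only [jacobianDerivation_apply, map_sub, map_mul, pderiv_map]

theorem exists_jacobianDerivation_algEquiv_eq_C [IsDomain A]
    (Φ : MvPolynomial (Fin 2) A ≃ₐ[A] MvPolynomial (Fin 2) A) :
    ∃ a : Aˣ, jacobianDerivation (Φ (X 0)) (Φ (X 1)) = C ↑a := by
  obtain ⟨a, ha, h⟩ := isUnit_iff_eq_C_of_isReduced.mp
    ((jacobianDerivation_eq_det fun i => Φ (X i)) ▸ isUnit_det_jacobianMatrix Φ)
  exact ⟨ha.unit, h⟩

end Jacobian

section Triangular

variable {A σ : Type*} [CommRing A] [IsDomain A] [CharZero A]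

theorem notMem_vars_of_pderiv_eq_zero {p : MvPolynomial σ A} {i : σ} (h : pderiv i p = 0) :
    i ∉ p.vars := by
  rw [mem_vars_iff_mem_support]
  rintro ⟨d, hd, hi⟩
  have hd' : d - Finsupp.single i 1 + Finsupp.single i 1 = d :=
    tsub_add_cancel_of_le (Finsupp.single_le_iff.mpr (Nat.one_le_iff_ne_zero.mpr
      (Finsupp.mem_support_iff.mp hi)))
  have := coeff_pderiv (i := i) p (d - Finsupp.single i 1)
  rw [h, coeff_zero, hd', eq_comm, mul_eq_zero] at this
  exact this.elim (mem_support_iff.mp hd) (Nat.cast_add_one_ne_zero _)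

theorem aeval_update_X_of_pderiv_eq_zero [DecidableEq σ] {p : MvPolynomial σ A} {i : σ}
    (h : pderiv i p = 0) (q : MvPolynomial σ A) : aeval (Function.update X i q) p = p := by
  conv_rhs => rw [← aeval_X_left_apply p]
  simp only [aeval_eq_eval₂Hom]
  refine eval₂Hom_congr' rfl (fun j hj _ => ?_) rfl
  exact Function.update_of_ne (ne_of_mem_of_not_mem hj (notMem_vars_of_pderiv_eq_zero h)) _ _

theorem bijective_aeval_update_X [DecidableEq σ] {t : MvPolynomial σ A} {i : σ} (b : Aˣ)
    (ht : pderiv i t = C (b : A)) :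
    Function.Bijective (aeval (R := A) (Function.update X i t)) := by
  obtain ⟨r, hr, rfl⟩ : ∃ r, pderiv i r = 0 ∧ t = r + C (b : A) * X i :=
    ⟨t - C (b : A) * X i, by simp [ht], by ring⟩
  have hC (u v : Aˣ) (huv : u * v = 1) (p : MvPolynomial σ A) :
      C (u : A) * (C (v : A) * p) = p := by
    rw [← mul_assoc, ← map_mul, ← Units.val_mul, huv, Units.val_one, map_one, one_mul]
  let α := aeval (R := A) (Function.update X i (r + C (b : A) * X i))
  let β := aeval (R := A) (Function.update X i (C (↑b⁻¹ : A) * (X i - r)))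
  refine (AlgEquiv.ofAlgHom α β (algHom_ext fun j => ?_) (algHom_ext fun j => ?_)).bijective <;>
    rcases eq_or_ne j i with rfl | hj <;>
    simp_all only [α, β, AlgHom.comp_apply, AlgHom.id_apply, aeval_X, aeval_C, algebraMap_eq,
      map_add, map_sub, map_mul, ne_eq, not_false_eq_true, Function.update_self,
      Function.update_of_ne, aeval_update_X_of_pderiv_eq_zero, add_sub_cancel_left, add_sub_cancel,
      hC _ _ (inv_mul_cancel b), hC _ _ (mul_inv_cancel b)]

end Triangular

section BaseChange

variable {A B σ : Type*} [CommRing A] [CommRing B]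

theorem aeval_map_algHom_X_map (u : A →+* B) (χ : MvPolynomial σ A →ₐ[A] MvPolynomial σ A)
    (p : MvPolynomial σ A) :
    aeval (R := B) (fun i => map u (χ (X i))) (map u p) = map u (χ p) := by
  conv_rhs => rw [aeval_unique χ]
  exact (map_bind₁ u _ p).symm

theorem exists_algEquiv_map_comm (u : A →+* B)
    (ψ : MvPolynomial σ A ≃ₐ[A] MvPolynomial σ A) :
    ∃ Ψ : MvPolynomial σ B ≃ₐ[B] MvPolynomial σ B, ∀ p, Ψ (map u p) = map u (ψ p) := by
  let e (χ : MvPolynomial σ A →ₐ[A] MvPolynomial σ A) :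
      MvPolynomial σ B →ₐ[B] MvPolynomial σ B :=
    aeval fun i => map u (χ (X i))
  have he (χ χ' : MvPolynomial σ A →ₐ[A] MvPolynomial σ A) :
      (e χ).comp (e χ') = e (χ.comp χ') :=
    algHom_ext fun i => by
      simp only [e, AlgHom.comp_apply, aeval_X]
      exact aeval_map_algHom_X_map u χ (χ' (X i))
  have he_id : e (AlgHom.id A _) = AlgHom.id B _ := algHom_ext fun i => by simp [e]
  refine ⟨AlgEquiv.ofAlgHom (e ψ) (e ψ.symm) ?_ ?_, aeval_map_algHom_X_map u ψ.toAlgHom⟩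
  · rw [he, AlgEquiv.comp_symm, he_id]
  · rw [he, AlgEquiv.symm_comp, he_id]

end BaseChange

section Descent

variable {K L σ τ : Type*} [CommRing K] [CommRing L] [Algebra K L]

noncomputable def mapLinear (π : L →ₗ[K] K) :
    MvPolynomial σ L →ₗ[K] MvPolynomial σ K where
  toFun := AddMonoidAlgebra.map (π : L →+ K)
  map_add' := AddMonoidAlgebra.map_add _
  map_smul' c p := by ext m; simp

@[simp]
theorem coeff_mapLinear (π : L →ₗ[K] K) (p : MvPolynomial σ L) (m : σ →₀ ℕ) :
    coeff m (mapLinear π p) = π (coeff m p) :=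
  rfl

theorem mapLinear_C (π : L →ₗ[K] K) (b : L) :
    mapLinear π (C b : MvPolynomial σ L) = C (π b) := by
  classical
  ext m
  simp only [coeff_mapLinear, coeff_C]
  split_ifs <;> simp

theorem mapLinear_map_mul (π : L →ₗ[K] K) (w : MvPolynomial σ K) (z : MvPolynomial σ L) :
    mapLinear π (map (algebraMap K L) w * z) = w * mapLinear π z := by
  classical
  ext m
  simp [coeff_mul, coeff_map, ← Algebra.smul_def]

theorem mapLinear_pderiv (π : L →ₗ[K] K) (i : σ) (z : MvPolynomial σ L) :
    mapLinear π (pderiv i z) = pderiv i (mapLinear π z) := by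
  ext m
  simp only [coeff_mapLinear, coeff_pderiv, ← Nat.cast_add_one, ← nsmul_eq_mul', map_nsmul]

theorem mapLinear_jacobianDerivation (π : L →ₗ[K] K) (F : MvPolynomial (Fin 2) K)
    (z : MvPolynomial (Fin 2) L) :
    mapLinear π (jacobianDerivation (map (algebraMap K L) F) z) =
      jacobianDerivation F (mapLinear π z) := by
  simp only [jacobianDerivation_apply, pderiv_map, map_sub, mapLinear_map_mul, mapLinear_pderiv]

theorem mapLinear_aeval_map (π : L →ₗ[K] K) (g : σ → MvPolynomial τ K)
    (p : MvPolynomial σ L) :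
    mapLinear π (aeval (fun i => map (algebraMap K L) (g i)) p) = aeval g (mapLinear π p) := by
  induction p using MvPolynomial.induction_on with
  | C b => simp [mapLinear_C]
  | add p q hp hq => simp only [map_add, hp, hq]
  | mul_X p j hp =>
    rw [map_mul, aeval_X, mul_comm, mapLinear_map_mul, hp, ← map_X (algebraMap K L) j,
      mul_comm p, mapLinear_map_mul, map_mul, aeval_X, mul_comm]

theorem mapLinear_map {π : L →ₗ[K] K} (hπ : ∀ x, π (algebraMap K L x) = x)
    (w : MvPolynomial σ K) : mapLinear π (map (algebraMap K L) w) = w := by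
  ext m
  simp [coeff_map, hπ]

theorem bijective_aeval_of_bijective_aeval_map {π : L →ₗ[K] K}
    (hπ : ∀ x, π (algebraMap K L x) = x) (g : σ → MvPolynomial τ K)
    (hg : Function.Bijective (aeval (R := L) fun i => map (algebraMap K L) (g i))) :
    Function.Bijective (aeval (R := K) g) := by
  have hinj : Function.Injective (map (σ := σ) (algebraMap K L)) :=
    map_injective _ (Function.LeftInverse.injective hπ)
  refine ⟨fun p q hpq => ?_, fun z => ?_⟩
  · have hmap (p) : map (algebraMap K L) (aeval g p) =
        aeval (fun i => map (algebraMap K L) (g i)) (map (algebraMap K L) p) :=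
      map_bind₁ _ g p
    refine hinj (hg.1 ?_)
    rw [← hmap, ← hmap, hpq]
  · obtain ⟨p, hp⟩ := hg.2 (map (algebraMap K L) z)
    exact ⟨mapLinear π p, by rw [← mapLinear_aeval_map, hp, mapLinear_map hπ]⟩

end Descent

section Coordinate

theorem bijective_aeval_of_jacobianDerivation_eq_one {A : Type*} [CommRing A] [IsDomain A]
    [CharZero A] (Φ : MvPolynomial (Fin 2) A ≃ₐ[A] MvPolynomial (Fin 2) A)
    (g : Fin 2 → MvPolynomial (Fin 2) A) (h0 : Φ (X 0) = g 0)
    (h1 : jacobianDerivation (g 0) (g 1) = 1) : Function.Bijective (aeval (R := A) g) := by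
  obtain ⟨a, ha⟩ := exists_jacobianDerivation_algEquiv_eq_C Φ
  obtain ⟨t, hgt⟩ := Φ.surjective (g 1)
  have ht : pderiv 1 t = C (↑a⁻¹ : A) := by
    have key := jacobianDerivation_aeval (fun i => Φ (X i)) t
    beta_reduce at key
    rw [aeval_algEquiv_X, aeval_algEquiv_X, ha, h0, hgt, h1] at key
    apply Φ.injective
    calc Φ (pderiv 1 t) = Φ (pderiv 1 t) * C (a : A) * C (↑a⁻¹ : A) := by
          rw [mul_assoc, ← map_mul, Units.mul_inv, map_one, mul_one]
      _ = Φ (C (↑a⁻¹ : A)) := by rw [← key, one_mul, ← algebraMap_eq, Φ.commutes]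
  have hg : aeval g = Φ.toAlgHom.comp (aeval (Function.update X 1 t)) :=
    algHom_ext fun i => by fin_cases i <;> simp [h0, hgt]
  rw [hg]
  exact Φ.bijective.comp (bijective_aeval_update_X a⁻¹ ht)

theorem exists_jacobianDerivation_eq_one {K L : Type*} [CommRing K] [CommRing L] [IsDomain L]
    [Algebra K L] {π : L →ₗ[K] K} (hπ : ∀ x, π (algebraMap K L x) = x)
    (F : MvPolynomial (Fin 2) K) (Φ : MvPolynomial (Fin 2) L ≃ₐ[L] MvPolynomial (Fin 2) L)
    (hΦ : Φ (X 0) = map (algebraMap K L) F) : ∃ s, jacobianDerivation F s = 1 := by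
  obtain ⟨a, ha⟩ := exists_jacobianDerivation_algEquiv_eq_C Φ
  refine ⟨mapLinear π (C (↑a⁻¹ : L) * Φ (X 1)), ?_⟩
  rw [← mapLinear_jacobianDerivation, ← hΦ, C_mul', Derivation.map_smul, ha, smul_eq_C_mul,
    ← map_mul, Units.inv_mul, map_one, ← map_one (map (algebraMap K L)), mapLinear_map hπ]

theorem exists_algEquiv_X_zero_of_map {K L : Type*} [CommRing K] [CommRing L] [IsDomain L]
    [CharZero L] [Algebra K L] {π : L →ₗ[K] K} (hπ : ∀ x, π (algebraMap K L x) = x)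
    (F : MvPolynomial (Fin 2) K) (Φ : MvPolynomial (Fin 2) L ≃ₐ[L] MvPolynomial (Fin 2) L)
    (hΦ : Φ (X 0) = map (algebraMap K L) F) :
    ∃ φ : MvPolynomial (Fin 2) K ≃ₐ[K] MvPolynomial (Fin 2) K, φ (X 0) = F := by
  obtain ⟨s, hs⟩ := exists_jacobianDerivation_eq_one hπ F Φ hΦ
  have hL := bijective_aeval_of_jacobianDerivation_eq_one Φ
    (fun i => map (algebraMap K L) (![F, s] i)) hΦ (by simp [← map_jacobianDerivation, hs])
  exact ⟨AlgEquiv.ofBijective _ (bijective_aeval_of_bijective_aeval_map hπ _ hL), by simp⟩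

end Coordinate

end MvPolynomial

/-- Let `R` be a domain containing `ℤ` with field of fractions `K`, and `S` an over-domain
of `R`. If `f ∈ R[x_1,x_2]` is a coordinate of `S[x_1,x_2]` over `S`, then `f` is a
coordinate of `K[x_1,x_2]` over `K`. -/
theorem statement13 {R S : Type*} [CommRing R] [IsDomain R] [CharZero R]
    [CommRing S] [IsDomain S] [Algebra R S] (hRS : Function.Injective (algebraMap R S))
    (f : MvPolynomial (Fin 2) R)
    (hf : ∃ ψ : PolyAut S 2, ψ (X 0) = MvPolynomial.map (algebraMap R S) f) :
    ∃ φ : PolyAut (FractionRing R) 2,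
      φ (X 0) = MvPolynomial.map (algebraMap R (FractionRing R)) f := by
  obtain ⟨ψ, hψ⟩ := hf
  obtain ⟨Ψ, hΨ⟩ := exists_algEquiv_map_comm (algebraMap S (FractionRing S)) ψ
  have : FaithfulSMul R (FractionRing S) := by
    rw [faithfulSMul_iff_algebraMap_injective, IsScalarTower.algebraMap_eq R S]
    exact (IsFractionRing.injective S _).comp hRS
  let := FractionRing.liftAlgebra R (FractionRing S)
  have : CharZero (FractionRing S) :=
    (RingHom.charZero_iff (FaithfulSMul.algebraMap_injective R (FractionRing S))).mp inferInstance
  obtain ⟨π, hπ⟩ := LinearMap.exists_leftInverse_of_injective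
    (Algebra.linearMap (FractionRing R) (FractionRing S))
    (LinearMap.ker_eq_bot.mpr (algebraMap (FractionRing R) (FractionRing S)).injective)
  refine exists_algEquiv_X_zero_of_map (L := FractionRing S) (LinearMap.congr_fun hπ) _ Ψ ?_
  rw [← map_X (algebraMap S _), hΨ, hψ, map_map, map_map, ← IsScalarTower.algebraMap_eq,
    ← IsScalarTower.algebraMap_eq]
end

section
/- Let R be an integral domain containing ℤ with field of fractions K, and let a_1, a_2 ∈ R∖{0} and b ∈ R be such that a_1/a_2 does not belong to V(R). Then f := a_1x_1 + a_2x_2 + b is not a coordinate of R[x_1,x_2] over R. -/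
/-!
If an `R`-automorphism `φ` of `R[x_1,x_2]` sends `x_1` to `a₁x_1 + a₂x_2 + b`, then `φ(x_1) - b`
lies in the extended ideal `I·R[x_1,x_2]`, `I = (a₁, a₂)`. Every `R`-algebra endomorphism
preserves `I·R[x_1,x_2]`, so applying `φ⁻¹` puts `x_1 - b` in it, i.e. `1 ∈ I`. Hence
`a₁R + a₂R = R`, which says exactly that `a₁/a₂ ∈ V(R)`.
-/

open MvPolynomial

/-- `V(R)` viewed inside an `R`-algebra `K`: fractions `α/β` with `α, β ∈ R∖{0}` and
`αR + βR = R`. -/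
def VSet (R : Type*) (K : Type*) [CommRing R] [CommRing K] [Algebra R K] : Set K :=
  {x : K | ∃ α β : R, α ≠ 0 ∧ β ≠ 0 ∧ Ideal.span ({α, β} : Set R) = ⊤ ∧
    x * algebraMap R K β = algebraMap R K α}

theorem div_mem_VSet_of_span_eq_top {R K : Type*} [CommRing R] [Field K] [Algebra R K]
    [FaithfulSMul R K] {a₁ a₂ : R} (ha₁ : a₁ ≠ 0) (ha₂ : a₂ ≠ 0)
    (hspan : Ideal.span ({a₁, a₂} : Set R) = ⊤) :
    algebraMap R K a₁ / algebraMap R K a₂ ∈ VSet R K := by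
  have ha₂K : algebraMap R K a₂ ≠ 0 :=
    (map_ne_zero_iff _ (FaithfulSMul.algebraMap_injective R K)).mpr ha₂
  exact ⟨a₁, a₂, ha₁, ha₂, hspan, div_mul_cancel₀ _ ha₂K⟩

namespace MvPolynomial

variable {R σ τ : Type*} [CommRing R] {I : Ideal R}

theorem algHom_mem_map_C {F : Type*} [FunLike F (MvPolynomial σ R) (MvPolynomial τ R)]
    [AlgHomClass F R (MvPolynomial σ R) (MvPolynomial τ R)] (ψ : F)
    {p : MvPolynomial σ R} (hp : p ∈ Ideal.map C I) : ψ p ∈ Ideal.map C I := by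
  have hψC : (ψ : MvPolynomial σ R →+* MvPolynomial τ R).comp C = C :=
    RingHom.ext fun r => AlgHomClass.commutes ψ r
  have := Ideal.mem_map_of_mem (ψ : MvPolynomial σ R →+* MvPolynomial τ R) hp
  rwa [Ideal.map_map, hψC] at this

theorem X_sub_C_notMem_map_C (hI : I ≠ ⊤) (i : σ) (b : R) :
    X i - C b ∉ Ideal.map C I := by
  classical
  intro h
  have hcoeff := mem_map_C_iff.mp h (Finsupp.single i 1)
  rw [coeff_sub, coeff_X, if_pos rfl, coeff_C,
    if_neg (Finsupp.single_ne_zero.mpr one_ne_zero).symm, sub_zero] at hcoeff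
  exact hI ((Ideal.eq_top_iff_one I).mpr hcoeff)

theorem algEquiv_X_sub_C_notMem_map_C (φ : MvPolynomial σ R ≃ₐ[R] MvPolynomial σ R)
    (hI : I ≠ ⊤) (i : σ) (b : R) : φ (X i) - C b ∉ Ideal.map C I := by
  intro h
  have := algHom_mem_map_C φ.symm h
  rw [map_sub, AlgEquiv.symm_apply_apply, show φ.symm (C b) = C b from φ.symm.commutes b] at this
  exact X_sub_C_notMem_map_C hI i b this

end MvPolynomial

theorem statement14_general {R : Type*} [CommRing R] [IsDomain R]
    (a₁ a₂ : R) (ha₁ : a₁ ≠ 0) (ha₂ : a₂ ≠ 0) (b : R)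
    (hV : algebraMap R (FractionRing R) a₁ / algebraMap R (FractionRing R) a₂
      ∉ VSet R (FractionRing R)) :
    ¬∃ φ : PolyAut R 2, φ (X 0) = C a₁ * X 0 + C a₂ * X 1 + C b := by
  rintro ⟨φ, hφ⟩
  set I := Ideal.span ({a₁, a₂} : Set R)
  have hI : I ≠ ⊤ := fun h => hV (div_mem_VSet_of_span_eq_top ha₁ ha₂ h)
  have hmem : ∀ a ∈ ({a₁, a₂} : Set R), C a ∈ Ideal.map (C : R →+* MvPolynomial (Fin 2) R) I :=
    fun a ha => Ideal.mem_map_of_mem C (Ideal.subset_span ha)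
  refine algEquiv_X_sub_C_notMem_map_C φ hI 0 b ?_
  rw [hφ, add_sub_cancel_right]
  exact Ideal.add_mem _ (Ideal.mul_mem_right _ _ (hmem a₁ (by simp)))
    (Ideal.mul_mem_right _ _ (hmem a₂ (by simp)))

/-- If `R` is a domain containing `ℤ`, `a₁, a₂ ∈ R∖{0}`, `b ∈ R` and `a₁/a₂ ∉ V(R)`,
then `a₁x_1 + a₂x_2 + b` is not a coordinate of `R[x_1,x_2]` over `R`. -/
theorem statement14 {R : Type*} [CommRing R] [IsDomain R] [CharZero R]
    (a₁ a₂ : R) (ha₁ : a₁ ≠ 0) (ha₂ : a₂ ≠ 0) (b : R)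
    (hV : algebraMap R (FractionRing R) a₁ / algebraMap R (FractionRing R) a₂
      ∉ VSet R (FractionRing R)) :
    ¬∃ φ : PolyAut R 2, φ (X 0) = C a₁ * X 0 + C a₂ * X 1 + C b :=
  statement14_general a₁ a₂ ha₁ ha₂ b hV
end
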